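/- Suppose in addition that σ is continuous and not identically zero, that m ∈ (d+2−4n, d], that s is an integer with s > max{d/4 + 2n − 1, d}, and that N := (∫_{ℝ^d} (1+|γ|²)^s |σ̂(γ)|² dγ)^{1/2} < ∞. Then there exists a constant C > 0, depending only on d, n, m, s, and C₁ (in particular independent of k and of σ), such that for every k > max{ 2C₁/‖σ‖_{L¹(B₁)}, 1 }, one has ‖σ‖_{L^∞(B₁)} ≤ C k^{d/s + m + 4n − d − 1} (1 + N) M_PL(k). (Lipschitz-type stability for the polyharmonic inverse random source problem.) -/

import Mathlib

open MeasureTheory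

noncomputable section

/-- `ℝ^d` with the Euclidean structure. -/
abbrev Ed (d : ℕ) := EuclideanSpace ℝ (Fin d)

/-- `β_d = e^{iπ/4}/√(8π)` for `d = 2` and `β_d = 1/(4π)` otherwise (`d = 3`). -/
def betaD (d : ℕ) : ℂ :=
  if d = 2 then Complex.exp (Complex.I * Real.pi / 4) / (Real.sqrt (8 * Real.pi) : ℝ)
  else 1 / (4 * (Real.pi : ℂ))

/-- Fourier transform `σ̂(γ) = ∫_{ℝ^d} σ(z) e^{-iγ·z} dz` of a real-valued function. -/
def sigmaHat (d : ℕ) (σ : Ed d → ℝ) (γ : Ed d) : ℂ :=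
  ∫ z, (σ z : ℂ) * Complex.exp (-Complex.I * ((inner ℝ γ z : ℝ) : ℂ))

/-- Correlation of far-field patterns of the stochastic polyharmonic wave equation:
`F_PL(x̂,ŷ,k) = (β_d²/n²) k^{d+1−4n} (k^{−m} σ̂(k(x̂+ŷ)) + ∫_{B₁} r(z,−kŷ) e^{−ik(x̂+ŷ)·z} dz)`. -/
def FPL (d n : ℕ) (m : ℝ) (σ : Ed d → ℝ) (r : Ed d → Ed d → ℂ) (k : ℝ)
    (x y : Ed d) : ℂ :=
  (betaD d) ^ 2 / (n : ℂ) ^ 2 * ((k ^ ((d : ℝ) + 1 - 4 * (n : ℝ)) : ℝ) : ℂ) *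
    (((k ^ (-m) : ℝ) : ℂ) * sigmaHat d σ (k • (x + y)) +
      ∫ z in Metric.ball (0 : Ed d) 1,
        r z (-(k • y)) * Complex.exp (-Complex.I * ((inner ℝ (k • (x + y)) z : ℝ) : ℂ)))

/-- `M_PL(k) = sup_{x̂,ŷ ∈ S^{d−1}} |F_PL(x̂,ŷ,k)|`. -/
def MPL (d n : ℕ) (m : ℝ) (σ : Ed d → ℝ) (r : Ed d → Ed d → ℂ) (k : ℝ) : ℝ :=
  sSup {v : ℝ | ∃ x y : Ed d, ‖x‖ = 1 ∧ ‖y‖ = 1 ∧ v = ‖FPL d n m σ r k x y‖}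

end

/-!
At a frequency `γ = k (x̂ + ŷ)` with `|γ| ≤ 2k` the data `F_PL(x̂, ŷ, k)` equal
`k^{-m} σ̂(γ)` up to the factor `β_d² k^{d+1-4n} / n²` and an error of size `C₁ k^{-m-1}`.
Taking `ŷ = -x̂` gives `γ = 0`, where `σ̂(0) = ‖σ‖_{L¹}`; as `k > 2C₁/‖σ‖_{L¹}`, the error is then
dominated by `M_PL(k)` itself, so `|σ̂| ≲ k^{m+4n-d-1} M_PL(k)` on the ball of radius `2k`.
By Fourier inversion `|σ(x)| ≤ (2π)^{-d} ∫ |σ̂|`. Split this integral at `ρ = k^{1/s}`: the low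
frequencies contribute `ρ^d sup |σ̂|`, and Cauchy–Schwarz against the weight `(1 + |γ|²)^s`
bounds the high frequencies by `N ρ^{d-s} = N k^{d/s} / k`, where `1/k` is again controlled by
`M_PL(k)` through the same error estimate.
-/

open MeasureTheory Metric Module FourierTransform Real

theorem sqrt_mul_mul_inv_sqrt {w : ℝ} (hw : 0 < w) (g : ℝ) : √w * g * (√w)⁻¹ = g := by
  have := Real.sqrt_pos.2 hw
  field_simp

section WeightedCauchySchwarz

variable {α : Type*} [MeasurableSpace α] {μ : Measure α} {w g : α → ℝ}

theorem memLp_two_sqrt_mul (hw : ∀ a, 0 < w a) (hwm : AEMeasurable w μ)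
    (hgm : AEMeasurable g μ) (hwg : Integrable (fun a ↦ w a * g a ^ 2) μ) :
    MemLp (fun a ↦ √(w a) * g a) 2 μ := by
  refine (memLp_two_iff_integrable_sq (hwm.sqrt.mul hgm).aestronglyMeasurable).2 (hwg.congr ?_)
  filter_upwards with a
  rw [Pi.mul_apply, mul_pow, Real.sq_sqrt (hw a).le]

theorem memLp_two_inv_sqrt (hw : ∀ a, 0 < w a) (hwm : AEMeasurable w μ)
    (hw' : Integrable (fun a ↦ (w a)⁻¹) μ) :
    MemLp (fun a ↦ (√(w a))⁻¹) 2 μ := by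
  refine (memLp_two_iff_integrable_sq hwm.sqrt.inv.aestronglyMeasurable).2 (hw'.congr ?_)
  filter_upwards with a
  rw [Pi.inv_apply, inv_pow, Real.sq_sqrt (hw a).le]

theorem integrable_of_integrable_weight_mul_sq (hw : ∀ a, 0 < w a)
    (hwm : AEMeasurable w μ) (hgm : AEMeasurable g μ)
    (hwg : Integrable (fun a ↦ w a * g a ^ 2) μ) (hw' : Integrable (fun a ↦ (w a)⁻¹) μ) :
    Integrable g μ := by
  refine ((memLp_two_sqrt_mul hw hwm hgm hwg).integrable_mul
    (memLp_two_inv_sqrt hw hwm hw')).congr ?_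
  filter_upwards with a
  exact sqrt_mul_mul_inv_sqrt (hw a) (g a)

theorem integral_le_sqrt_mul_sqrt_of_weight (hw : ∀ a, 0 < w a) (hg : ∀ a, 0 ≤ g a)
    (hwm : AEMeasurable w μ) (hgm : AEMeasurable g μ)
    (hwg : Integrable (fun a ↦ w a * g a ^ 2) μ) (hw' : Integrable (fun a ↦ (w a)⁻¹) μ) :
    ∫ a, g a ∂μ ≤ √(∫ a, w a * g a ^ 2 ∂μ) * √(∫ a, (w a)⁻¹ ∂μ) := by
  have key := integral_mul_le_Lp_mul_Lq_of_nonneg Real.HolderConjugate.two_two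
    (.of_forall fun a ↦ mul_nonneg (Real.sqrt_nonneg _) (hg a))
    (.of_forall fun a ↦ (inv_nonneg.2 (Real.sqrt_nonneg (w a))))
    (by simpa using memLp_two_sqrt_mul hw hwm hgm hwg)
    (by simpa using memLp_two_inv_sqrt hw hwm hw')
  simpa only [sqrt_mul_mul_inv_sqrt (hw _), Real.rpow_two, mul_pow, inv_pow,
    Real.sq_sqrt (hw _).le, ← Real.sqrt_eq_rpow] using key

end WeightedCauchySchwarz

theorem inv_rpow_le_rpow_sub_mul_rpow_neg {t u d s : ℝ} (hu : 0 < u) (hut : u ≤ t) (hds : d ≤ s) :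
    (t ^ s)⁻¹ ≤ u ^ (d - s) * t ^ (-d) := by
  have ht : 0 < t := hu.trans_le hut
  calc (t ^ s)⁻¹ = t ^ (d - s) * t ^ (-d) := by
        rw [← Real.rpow_add ht, ← Real.rpow_neg ht.le]; ring_nf
    _ ≤ u ^ (d - s) * t ^ (-d) :=
        mul_le_mul_of_nonneg_right (Real.rpow_le_rpow_of_nonpos hu hut (by linarith))
          (by positivity)

section SobolevTail

variable {E : Type*} [NormedAddCommGroup E] [NormedSpace ℝ E] [FiniteDimensional ℝ E]
  [MeasurableSpace E] [BorelSpace E] {μ : Measure E} [μ.IsAddHaarMeasure] {g : E → ℝ} {s ρ : ℝ}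

theorem integrable_inv_one_add_sq_rpow (hs : (finrank ℝ E : ℝ) < 2 * s) :
    Integrable (fun γ : E ↦ ((1 + ‖γ‖ ^ 2) ^ s)⁻¹) μ := by
  have h := integrable_rpow_neg_one_add_norm_sq (μ := μ) hs
  refine h.congr (.of_forall fun γ ↦ ?_)
  dsimp only
  rw [show -(2 * s) / 2 = -s by ring, Real.rpow_neg (by positivity)]

theorem integrable_of_integrable_one_add_sq_rpow_mul_sq (hgm : AEMeasurable g μ)
    (hs : (finrank ℝ E : ℝ) < s) (hH : Integrable (fun γ ↦ (1 + ‖γ‖ ^ 2) ^ s * g γ ^ 2) μ) :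
    Integrable g μ :=
  integrable_of_integrable_weight_mul_sq (fun _ ↦ by positivity) (by fun_prop) hgm hH
    (integrable_inv_one_add_sq_rpow (by linarith [(finrank ℝ E).cast_nonneg (α := ℝ)]))

theorem setIntegral_ball_le {B : ℝ} (hg : IntegrableOn g (ball 0 ρ) μ) (hρ : 0 < ρ)
    (hB : ∀ γ ∈ ball (0 : E) ρ, g γ ≤ B) :
    ∫ γ in ball 0 ρ, g γ ∂μ ≤ μ.real (ball 0 1) * ρ ^ finrank ℝ E * B := by
  calc ∫ γ in ball 0 ρ, g γ ∂μ ≤ ∫ _ in ball (0 : E) ρ, B ∂μ :=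
        setIntegral_mono_on hg (integrableOn_const measure_ball_lt_top.ne) measurableSet_ball hB
    _ = μ.real (ball 0 1) * ρ ^ finrank ℝ E * B := by
        rw [setIntegral_const, smul_eq_mul, measureReal_def, Measure.addHaar_ball_of_pos μ _ hρ,
          ENNReal.toReal_mul, ENNReal.toReal_ofReal (by positivity), measureReal_def]
        ring

theorem setIntegral_compl_ball_le [Nontrivial E] (hg : ∀ γ, 0 ≤ g γ) (hgm : AEMeasurable g μ)
    (hs : (finrank ℝ E : ℝ) < s) (hH : Integrable (fun γ ↦ (1 + ‖γ‖ ^ 2) ^ s * g γ ^ 2) μ)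
    (hρ : 0 < ρ) :
    ∫ γ in (ball 0 ρ)ᶜ, g γ ∂μ ≤ √(∫ γ, (1 + ‖γ‖ ^ 2) ^ s * g γ ^ 2 ∂μ) *
      √(∫ γ, (1 + ‖γ‖ ^ 2) ^ (-(finrank ℝ E : ℝ)) ∂μ) * ρ ^ ((finrank ℝ E : ℝ) - s) := by
  set d : ℝ := (finrank ℝ E : ℝ)
  have hd : 0 < d := Nat.cast_pos.2 finrank_pos
  have hs2 : d < 2 * s := by linarith
  have hJ : Integrable (fun γ : E ↦ (1 + ‖γ‖ ^ 2) ^ (-d)) μ :=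
    (integrable_inv_one_add_sq_rpow (s := d) (by linarith)).congr
      (.of_forall fun γ ↦ (Real.rpow_neg (by positivity) d).symm)
  have hweight : ∫ γ in (ball 0 ρ)ᶜ, ((1 + ‖γ‖ ^ 2) ^ s)⁻¹ ∂μ ≤
      (ρ ^ 2) ^ (d - s) * ∫ γ, (1 + ‖γ‖ ^ 2) ^ (-d) ∂μ := by
    rw [← integral_const_mul]
    calc ∫ γ in (ball 0 ρ)ᶜ, ((1 + ‖γ‖ ^ 2) ^ s)⁻¹ ∂μ
        ≤ ∫ γ in (ball 0 ρ)ᶜ, (ρ ^ 2) ^ (d - s) * (1 + ‖γ‖ ^ 2) ^ (-d) ∂μ := by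
          refine setIntegral_mono_on (integrable_inv_one_add_sq_rpow hs2).integrableOn
            (hJ.const_mul _).integrableOn measurableSet_ball.compl fun γ hγ ↦ ?_
          rw [Set.mem_compl_iff, mem_ball_zero_iff, not_lt] at hγ
          exact inv_rpow_le_rpow_sub_mul_rpow_neg (by positivity)
            (by nlinarith [norm_nonneg γ]) hs.le
      _ ≤ ∫ γ, (ρ ^ 2) ^ (d - s) * (1 + ‖γ‖ ^ 2) ^ (-d) ∂μ :=
          setIntegral_le_integral (hJ.const_mul _) (.of_forall fun _ ↦ by positivity)
  calc ∫ γ in (ball 0 ρ)ᶜ, g γ ∂μ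
      ≤ √(∫ γ in (ball 0 ρ)ᶜ, (1 + ‖γ‖ ^ 2) ^ s * g γ ^ 2 ∂μ) *
          √(∫ γ in (ball 0 ρ)ᶜ, ((1 + ‖γ‖ ^ 2) ^ s)⁻¹ ∂μ) :=
        integral_le_sqrt_mul_sqrt_of_weight (fun _ ↦ by positivity) hg (by fun_prop)
          hgm.restrict hH.integrableOn (integrable_inv_one_add_sq_rpow hs2).integrableOn
    _ ≤ √(∫ γ, (1 + ‖γ‖ ^ 2) ^ s * g γ ^ 2 ∂μ) *
          √((ρ ^ 2) ^ (d - s) * ∫ γ, (1 + ‖γ‖ ^ 2) ^ (-d) ∂μ) :=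
        mul_le_mul
          (Real.sqrt_le_sqrt (setIntegral_le_integral hH (.of_forall fun γ ↦ by positivity)))
          (Real.sqrt_le_sqrt hweight) (Real.sqrt_nonneg _) (Real.sqrt_nonneg _)
    _ = _ := by
        rw [Real.sqrt_mul (by positivity), ← Real.rpow_natCast, ← Real.rpow_mul hρ.le,
          mul_comm (((2 : ℕ) : ℝ)), Real.rpow_mul hρ.le, Real.rpow_natCast,
          Real.sqrt_sq (by positivity)]
        ring

theorem integral_le_of_le_on_closedBall [Nontrivial E] {B : ℝ} (hg : ∀ γ, 0 ≤ g γ)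
    (hgm : AEMeasurable g μ) (hs : (finrank ℝ E : ℝ) < s)
    (hH : Integrable (fun γ ↦ (1 + ‖γ‖ ^ 2) ^ s * g γ ^ 2) μ) (hρ : 0 < ρ)
    (hB : ∀ γ : E, ‖γ‖ ≤ ρ → g γ ≤ B) :
    ∫ γ, g γ ∂μ ≤ μ.real (ball 0 1) * ρ ^ finrank ℝ E * B +
      √(∫ γ, (1 + ‖γ‖ ^ 2) ^ s * g γ ^ 2 ∂μ) *
      √(∫ γ, (1 + ‖γ‖ ^ 2) ^ (-(finrank ℝ E : ℝ)) ∂μ) * ρ ^ ((finrank ℝ E : ℝ) - s) := by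
  have hgi := integrable_of_integrable_one_add_sq_rpow_mul_sq hgm hs hH
  rw [← integral_add_compl measurableSet_ball hgi]
  exact add_le_add
    (setIntegral_ball_le hgi.integrableOn hρ fun γ hγ ↦ hB γ (mem_ball_zero_iff.1 hγ).le)
    (setIntegral_compl_ball_le hg hgm hs hH hρ)

end SobolevTail

section UnitVectors

open scoped RealInnerProductSpace

variable {E : Type*} [NormedAddCommGroup E] [InnerProductSpace ℝ E] [FiniteDimensional ℝ E]

theorem exists_norm_eq_one_inner_eq_zero (hE : 2 ≤ finrank ℝ E) (γ : E) :
    ∃ v : E, ‖v‖ = 1 ∧ ⟪γ, v⟫ = 0 := by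
  have : Nontrivial (ℝ ∙ γ)ᗮ := by
    apply nontrivial_of_finrank_pos (R := ℝ)
    have hγ : finrank ℝ (ℝ ∙ γ) ≤ 1 := by
      simpa using finrank_span_le_card (R := ℝ) ({γ} : Set E)
    have := (ℝ ∙ γ).finrank_add_finrank_orthogonal
    lia
  obtain ⟨w, hw⟩ : ∃ w : (ℝ ∙ γ)ᗮ, w ≠ 0 := exists_ne 0
  refine ⟨(‖(w : E)‖⁻¹ : ℝ) • (w : E), norm_smul_inv_norm (by simpa using hw), ?_⟩
  rw [real_inner_smul_right, Submodule.mem_orthogonal_singleton_iff_inner_right.1 w.2, mul_zero]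

theorem exists_norm_eq_one_add_eq (hE : 2 ≤ finrank ℝ E) {γ : E} (hγ : ‖γ‖ ≤ 2) :
    ∃ x y : E, ‖x‖ = 1 ∧ ‖y‖ = 1 ∧ x + y = γ := by
  obtain ⟨v, hv, hγv⟩ := exists_norm_eq_one_inner_eq_zero hE γ
  set t := √(1 - ‖γ‖ ^ 2 / 4)
  have ht : t ^ 2 = 1 - ‖γ‖ ^ 2 / 4 := Real.sq_sqrt (by nlinarith [norm_nonneg γ])
  have horth : ⟪(2 : ℝ)⁻¹ • γ, t • v⟫ = 0 := by
    rw [real_inner_smul_left, real_inner_smul_right, hγv, mul_zero, mul_zero]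
  have hsq : ‖(2 : ℝ)⁻¹ • γ‖ * ‖(2 : ℝ)⁻¹ • γ‖ + ‖t • v‖ * ‖t • v‖ = 1 := by
    simp only [norm_smul, hv, Real.norm_eq_abs, abs_of_pos (by norm_num : (0 : ℝ) < 2⁻¹)]
    nlinarith [sq_abs t]
  refine ⟨(2 : ℝ)⁻¹ • γ + t • v, (2 : ℝ)⁻¹ • γ - t • v, ?_, ?_, by module⟩
  · have := norm_add_sq_eq_norm_sq_add_norm_sq_real horth
    nlinarith [norm_nonneg ((2 : ℝ)⁻¹ • γ + t • v)]
  · have := norm_sub_sq_eq_norm_sq_add_norm_sq_real horth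
    nlinarith [norm_nonneg ((2 : ℝ)⁻¹ • γ - t • v)]

end UnitVectors

section Fourier

variable {d : ℕ} {σ : Ed d → ℝ}

theorem fourier_ofReal_eq_sigmaHat (σ : Ed d → ℝ) (w : Ed d) :
    𝓕 (fun z ↦ (σ z : ℂ)) w = sigmaHat d σ ((2 * π) • w) := by
  rw [Real.fourier_eq', sigmaHat]
  congr 1; ext z
  rw [smul_eq_mul, mul_comm, real_inner_smul_left, real_inner_comm]
  push_cast
  ring_nf

theorem continuous_fourier_ofReal (hσ : Integrable σ) : Continuous (𝓕 fun z ↦ (σ z : ℂ)) :=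
  VectorFourier.fourierIntegral_continuous Real.continuous_fourierChar
    (innerSL ℝ).continuous₂ hσ.ofReal

theorem continuous_sigmaHat (hσ : Integrable σ) : Continuous (sigmaHat d σ) := by
  convert (continuous_fourier_ofReal hσ).comp (continuous_const_smul (2 * π)⁻¹) using 1
  ext γ
  rw [Function.comp_apply, fourier_ofReal_eq_sigmaHat, smul_smul,
    mul_inv_cancel₀ (by positivity), one_smul]

theorem abs_le_integral_norm_sigmaHat (hσc : Continuous σ) (hσ : Integrable σ)
    (hσ' : Integrable fun γ ↦ ‖sigmaHat d σ γ‖) (x : Ed d) :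
    |σ x| ≤ ((2 * π) ^ d)⁻¹ * ∫ γ, ‖sigmaHat d σ γ‖ := by
  have hnorm : ∀ w, ‖𝓕 (fun z ↦ (σ z : ℂ)) w‖ = ‖sigmaHat d σ ((2 * π) • w)‖ := fun w ↦ by
    rw [fourier_ofReal_eq_sigmaHat]
  have hF : Integrable (𝓕 fun z ↦ (σ z : ℂ)) :=
    (integrable_norm_iff (continuous_fourier_ofReal hσ).aestronglyMeasurable).1
      ((hσ'.comp_smul (by positivity : (2 * π) ≠ 0)).congr (.of_forall fun w ↦ (hnorm w).symm))
  have hinv : 𝓕⁻ (𝓕 fun z ↦ (σ z : ℂ)) = fun z ↦ (σ z : ℂ) :=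
    (Complex.continuous_ofReal.comp hσc).fourierInv_fourier_eq hσ.ofReal hF
  calc |σ x| = ‖𝓕⁻ (𝓕 fun z ↦ (σ z : ℂ)) x‖ := by
        rw [hinv, Complex.norm_real, Real.norm_eq_abs]
    _ ≤ ∫ w, ‖𝓕 (fun z ↦ (σ z : ℂ)) w‖ := by
        rw [Real.fourierInv_eq]
        refine (norm_integral_le_integral_norm _).trans_eq ?_
        simp only [Circle.norm_smul]
    _ = ((2 * π) ^ d)⁻¹ * ∫ γ, ‖sigmaHat d σ γ‖ := by
        simp only [hnorm]
        rw [Measure.integral_comp_smul_of_nonneg volume (fun γ ↦ ‖sigmaHat d σ γ‖) (2 * π)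
          (hR := by positivity), finrank_euclideanSpace_fin, smul_eq_mul]

theorem abs_le_of_norm_sigmaHat_le (hd : 0 < d) (hσc : Continuous σ) (hσ : Integrable σ)
    {s : ℝ} (hs : (d : ℝ) < s)
    (hH : Integrable fun γ : Ed d ↦ (1 + ‖γ‖ ^ 2) ^ s * ‖sigmaHat d σ γ‖ ^ 2)
    {k B : ℝ} (hk : 1 ≤ k) (hB : ∀ γ : Ed d, ‖γ‖ ≤ k → ‖sigmaHat d σ γ‖ ≤ B) (x : Ed d) :
    |σ x| ≤ ((2 * π) ^ d)⁻¹ * (volume.real (ball (0 : Ed d) 1) * B +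
      √(∫ γ : Ed d, (1 + ‖γ‖ ^ 2) ^ s * ‖sigmaHat d σ γ‖ ^ 2) *
      √(∫ γ : Ed d, (1 + ‖γ‖ ^ 2) ^ (-(d : ℝ))) / k) * k ^ ((d : ℝ) / s) := by
  have : Nonempty (Fin d) := ⟨⟨0, hd⟩⟩
  have hk0 : 0 < k := one_pos.trans_le hk
  have hs1 : 1 ≤ s := le_trans (by exact_mod_cast hd) hs.le
  set ρ := k ^ (1 / s)
  have hρk : ρ ≤ k :=
    (Real.rpow_le_rpow_of_exponent_le hk (div_le_one_of_le₀ hs1 (zero_le_one.trans hs1))).trans_eq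
      (Real.rpow_one k)
  have hρd : ρ ^ d = k ^ ((d : ℝ) / s) := by
    rw [← Real.rpow_natCast, ← Real.rpow_mul hk0.le, one_div_mul_eq_div]
  have hρds : ρ ^ ((d : ℝ) - s) = k ^ ((d : ℝ) / s) / k := by
    rw [← Real.rpow_mul hk0.le, ← Real.rpow_sub_one hk0.ne']
    congr 1
    field_simp
  have hint := integral_le_of_le_on_closedBall (μ := volume) (fun γ ↦ norm_nonneg _)
    (continuous_sigmaHat hσ).norm.aemeasurable (by simpa using hs) hH (by positivity)
    (fun γ hγ ↦ hB γ (hγ.trans hρk))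
  simp only [finrank_euclideanSpace_fin, hρd, hρds] at hint
  calc |σ x| ≤ ((2 * π) ^ d)⁻¹ * ∫ γ, ‖sigmaHat d σ γ‖ :=
        abs_le_integral_norm_sigmaHat hσc hσ (integrable_of_integrable_one_add_sq_rpow_mul_sq
          (continuous_sigmaHat hσ).norm.aemeasurable (by simpa using hs) hH) x
    _ ≤ _ := by
        refine (mul_le_mul_of_nonneg_left hint (by positivity)).trans_eq ?_
        ring

end Fourier

section FarField

noncomputable def farFieldRemainder (d : ℕ) (r : Ed d → Ed d → ℂ) (k : ℝ) (x y : Ed d) : ℂ :=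
  ∫ z in ball (0 : Ed d) 1,
    r z (-(k • y)) * Complex.exp (-Complex.I * ((inner ℝ (k • (x + y)) z : ℝ) : ℂ))

def RemainderDecay (d : ℕ) (m C₁ : ℝ) (r : Ed d → Ed d → ℂ) : Prop :=
  ∀ ξ : Ed d, 1 < ‖ξ‖ → (∫ z in ball (0 : Ed d) 1, ‖r z ξ‖) ≤ C₁ * ‖ξ‖ ^ (-(m + 1))

noncomputable def farFieldScale (d n : ℕ) (m k : ℝ) : ℝ :=
  ‖betaD d ^ 2 / (n : ℂ) ^ 2‖ * k ^ ((d : ℝ) + 1 - 4 * n - m)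

variable {d n : ℕ} {m C₁ k : ℝ} {σ : Ed d → ℝ} {r : Ed d → Ed d → ℂ}

theorem betaD_ne_zero (d : ℕ) : betaD d ≠ 0 := by
  unfold betaD
  split_ifs
  · exact div_ne_zero (Complex.exp_ne_zero _) (Complex.ofReal_ne_zero.2 (by positivity))
  · simp [pi_ne_zero]

theorem norm_betaD_sq_div_pos (hn : n ≠ 0) : 0 < ‖betaD d ^ 2 / (n : ℂ) ^ 2‖ :=
  norm_pos_iff.2 (div_ne_zero (pow_ne_zero _ (betaD_ne_zero d)) (by simpa))

theorem farFieldScale_pos (hn : n ≠ 0) (hk : 0 < k) : 0 < farFieldScale d n m k :=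
  mul_pos (norm_betaD_sq_div_pos hn) (rpow_pos_of_pos hk _)

theorem farFieldScale_nonneg (hk : 0 ≤ k) : 0 ≤ farFieldScale d n m k :=
  mul_nonneg (norm_nonneg _) (rpow_nonneg hk _)

theorem norm_betaD_sq_div_eq_farFieldScale_mul (hk : 0 < k) :
    ‖betaD d ^ 2 / (n : ℂ) ^ 2‖ = farFieldScale d n m k * k ^ (m + 4 * n - d - 1) := by
  rw [farFieldScale, mul_assoc, ← rpow_add hk, show (d : ℝ) + 1 - 4 * n - m + (m + 4 * n - d - 1)
    = 0 by ring, rpow_zero, mul_one]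

theorem norm_FPL (hk : 0 < k) (x y : Ed d) :
    ‖FPL d n m σ r k x y‖ = farFieldScale d n m k *
      ‖sigmaHat d σ (k • (x + y)) + ((k ^ m : ℝ) : ℂ) * farFieldRemainder d r k x y‖ := by
  have hkm : k ^ (-m) * k ^ m = 1 := by rw [← rpow_add hk, neg_add_cancel, rpow_zero]
  have hsplit : ((k ^ (-m) : ℝ) : ℂ) * sigmaHat d σ (k • (x + y)) + farFieldRemainder d r k x y =
      ((k ^ (-m) : ℝ) : ℂ) *
        (sigmaHat d σ (k • (x + y)) + ((k ^ m : ℝ) : ℂ) * farFieldRemainder d r k x y) := by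
    rw [mul_add, ← mul_assoc, ← Complex.ofReal_mul, hkm, Complex.ofReal_one, one_mul]
  rw [FPL, ← farFieldRemainder, hsplit, norm_mul, norm_mul, norm_mul, Complex.norm_real,
    Complex.norm_real, norm_of_nonneg (rpow_nonneg hk.le _), norm_of_nonneg (rpow_nonneg hk.le _),
    farFieldScale, sub_eq_add_neg _ m, rpow_add hk]
  ring

theorem norm_exp_neg_I_mul_ofReal (t : ℝ) : ‖Complex.exp (-Complex.I * t)‖ = 1 := by
  rw [Complex.norm_exp]
  simp

theorem norm_rpow_mul_farFieldRemainder_le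
    (hr : RemainderDecay d m C₁ r)
    (hk : 1 < k) (x : Ed d) {y : Ed d} (hy : ‖y‖ = 1) :
    ‖((k ^ m : ℝ) : ℂ) * farFieldRemainder d r k x y‖ ≤ C₁ / k := by
  have hk0 : 0 < k := one_pos.trans hk
  have hξ : ‖-(k • y)‖ = k := by rw [norm_neg, norm_smul, hy, mul_one, norm_of_nonneg hk0.le]
  have hR : ‖farFieldRemainder d r k x y‖ ≤ C₁ * k ^ (-(m + 1)) := by
    refine (norm_integral_le_integral_norm _).trans ?_
    simp only [norm_mul, norm_exp_neg_I_mul_ofReal, mul_one]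
    calc _ ≤ C₁ * ‖-(k • y)‖ ^ (-(m + 1)) := hr _ (hξ.symm ▸ hk)
      _ = C₁ * k ^ (-(m + 1)) := by rw [hξ]
  rw [norm_mul, Complex.norm_real, norm_of_nonneg (rpow_nonneg hk0.le _)]
  calc k ^ m * ‖farFieldRemainder d r k x y‖ ≤ k ^ m * (C₁ * k ^ (-(m + 1))) := by gcongr
    _ = C₁ / k := by
        rw [mul_left_comm, ← rpow_add hk0, show m + -(m + 1) = -1 by ring, rpow_neg_one,
          div_eq_mul_inv]

theorem norm_sigmaHat_le_integral (hσ : ∀ z, 0 ≤ σ z) (γ : Ed d) :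
    ‖sigmaHat d σ γ‖ ≤ ∫ z, σ z := by
  refine (norm_integral_le_integral_norm _).trans_eq ?_
  simp only [norm_mul, norm_exp_neg_I_mul_ofReal, mul_one, Complex.norm_real,
    norm_of_nonneg (hσ _)]

theorem norm_sigmaHat_zero (hσ : ∀ z, 0 ≤ σ z) : ‖sigmaHat d σ 0‖ = ∫ z, σ z := by
  simp only [sigmaHat, inner_zero_left, Complex.ofReal_zero, mul_zero, Complex.exp_zero, mul_one,
    integral_complex_ofReal, Complex.norm_real, norm_of_nonneg (integral_nonneg hσ)]

theorem norm_FPL_le (hσ : ∀ z, 0 ≤ σ z)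
    (hr : RemainderDecay d m C₁ r)
    (hk : 1 < k) (x : Ed d) {y : Ed d} (hy : ‖y‖ = 1) :
    ‖FPL d n m σ r k x y‖ ≤ farFieldScale d n m k * ((∫ z, σ z) + C₁ / k) := by
  rw [norm_FPL (one_pos.trans hk)]
  refine mul_le_mul_of_nonneg_left ?_ (farFieldScale_nonneg (one_pos.trans hk).le)
  exact (norm_add_le _ _).trans (add_le_add (norm_sigmaHat_le_integral hσ _)
    (norm_rpow_mul_farFieldRemainder_le hr hk x hy))

theorem farFieldScale_mul_norm_sigmaHat_le
    (hr : RemainderDecay d m C₁ r)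
    (hk : 1 < k) (x : Ed d) {y : Ed d} (hy : ‖y‖ = 1) :
    farFieldScale d n m k * ‖sigmaHat d σ (k • (x + y))‖ ≤
      ‖FPL d n m σ r k x y‖ + farFieldScale d n m k * (C₁ / k) := by
  rw [norm_FPL (one_pos.trans hk), ← mul_add]
  refine mul_le_mul_of_nonneg_left ?_ (farFieldScale_nonneg (one_pos.trans hk).le)
  set T := ((k ^ m : ℝ) : ℂ) * farFieldRemainder d r k x y
  calc ‖sigmaHat d σ (k • (x + y))‖ = ‖(sigmaHat d σ (k • (x + y)) + T) - T‖ := by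
        rw [add_sub_cancel_right]
    _ ≤ ‖sigmaHat d σ (k • (x + y)) + T‖ + ‖T‖ := norm_sub_le _ _
    _ ≤ ‖sigmaHat d σ (k • (x + y)) + T‖ + C₁ / k :=
        add_le_add_right (norm_rpow_mul_farFieldRemainder_le hr hk x hy) _

theorem norm_FPL_le_MPL (hσ : ∀ z, 0 ≤ σ z)
    (hr : RemainderDecay d m C₁ r)
    (hk : 1 < k) {x y : Ed d} (hx : ‖x‖ = 1) (hy : ‖y‖ = 1) :
    ‖FPL d n m σ r k x y‖ ≤ MPL d n m σ r k :=
  le_csSup ⟨_, by rintro _ ⟨x, y, -, hy, rfl⟩; exact norm_FPL_le hσ hr hk x hy⟩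
    ⟨x, y, hx, hy, rfl⟩

theorem farFieldScale_mul_norm_sigmaHat_le_MPL (hd : 2 ≤ d) (hσ : ∀ z, 0 ≤ σ z)
    (hr : RemainderDecay d m C₁ r)
    (hk : 1 < k) {γ : Ed d} (hγ : ‖γ‖ ≤ 2 * k) :
    farFieldScale d n m k * ‖sigmaHat d σ γ‖ ≤
      MPL d n m σ r k + farFieldScale d n m k * (C₁ / k) := by
  have hk0 : 0 < k := one_pos.trans hk
  obtain ⟨x, y, hx, hy, hxy⟩ := exists_norm_eq_one_add_eq (E := Ed d) (by simpa using hd)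
    (γ := k⁻¹ • γ) (by
      rw [norm_smul, norm_inv, norm_of_nonneg hk0.le, inv_mul_le_iff₀ hk0]; linarith)
  have hγ' : k • (x + y) = γ := by rw [hxy, smul_inv_smul₀ hk0.ne']
  calc farFieldScale d n m k * ‖sigmaHat d σ γ‖
      ≤ ‖FPL d n m σ r k x y‖ + farFieldScale d n m k * (C₁ / k) :=
        hγ' ▸ farFieldScale_mul_norm_sigmaHat_le hr hk x hy
    _ ≤ MPL d n m σ r k + farFieldScale d n m k * (C₁ / k) := by
        gcongr; exact norm_FPL_le_MPL hσ hr hk hx hy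

theorem farFieldScale_mul_div_le_MPL (hd : 2 ≤ d) (hσ : ∀ z, 0 ≤ σ z)
    (hr : RemainderDecay d m C₁ r)
    (hk : 1 < k) (hmass : 2 * (C₁ / k) ≤ ∫ z, σ z) :
    farFieldScale d n m k * (C₁ / k) ≤ MPL d n m σ r k := by
  have h0 := farFieldScale_mul_norm_sigmaHat_le_MPL (n := n) hd hσ hr hk (γ := 0)
    (by rw [norm_zero]; linarith)
  rw [norm_sigmaHat_zero hσ] at h0
  nlinarith [farFieldScale_nonneg (d := d) (n := n) (m := m) (one_pos.trans hk).le]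

theorem farFieldScale_mul_norm_sigmaHat_le_two_mul_MPL (hd : 2 ≤ d) (hσ : ∀ z, 0 ≤ σ z)
    (hr : RemainderDecay d m C₁ r)
    (hk : 1 < k) (hmass : 2 * (C₁ / k) ≤ ∫ z, σ z) {γ : Ed d} (hγ : ‖γ‖ ≤ 2 * k) :
    farFieldScale d n m k * ‖sigmaHat d σ γ‖ ≤ 2 * MPL d n m σ r k := by
  linarith [farFieldScale_mul_norm_sigmaHat_le_MPL (n := n) hd hσ hr hk hγ,
    farFieldScale_mul_div_le_MPL (n := n) hd hσ hr hk hmass]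

theorem abs_le_mul_MPL (hd : 2 ≤ d) (hn : n ≠ 0) (hC₁ : 0 < C₁) {s : ℝ} (hs : (d : ℝ) < s)
    (hσ : Integrable σ) (hσ0 : ∀ z, 0 ≤ σ z) (hσc : Continuous σ) (hr : RemainderDecay d m C₁ r)
    (hH : Integrable fun γ : Ed d ↦ (1 + ‖γ‖ ^ 2) ^ s * ‖sigmaHat d σ γ‖ ^ 2)
    (hk : 1 < k) (hmass : 2 * (C₁ / k) ≤ ∫ z, σ z) (x : Ed d) :
    |σ x| ≤ ((2 * π) ^ d)⁻¹ * (2 * volume.real (ball (0 : Ed d) 1) +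
        √(∫ γ : Ed d, (1 + ‖γ‖ ^ 2) ^ (-(d : ℝ))) / C₁) / ‖betaD d ^ 2 / (n : ℂ) ^ 2‖ *
      k ^ ((d : ℝ) / s + m + 4 * n - d - 1) *
      (1 + √(∫ γ : Ed d, (1 + ‖γ‖ ^ 2) ^ s * ‖sigmaHat d σ γ‖ ^ 2)) * MPL d n m σ r k := by
  have hk0 : 0 < k := one_pos.trans hk
  set a := farFieldScale d n m k
  set M := MPL d n m σ r k
  set V := volume.real (ball (0 : Ed d) 1)
  set J := ∫ γ : Ed d, (1 + ‖γ‖ ^ 2) ^ (-(d : ℝ))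
  set N := √(∫ γ : Ed d, (1 + ‖γ‖ ^ 2) ^ s * ‖sigmaHat d σ γ‖ ^ 2)
  have ha : 0 < a := farFieldScale_pos hn hk0
  have hrem : a * (C₁ / k) ≤ M := farFieldScale_mul_div_le_MPL hd hσ0 hr hk hmass
  have hM : 0 ≤ M := le_trans (by positivity) hrem
  have hinvk : 1 / k ≤ M / (a * C₁) := by
    rw [le_div_iff₀ (by positivity)]
    linarith [show 1 / k * (a * C₁) = a * (C₁ / k) by ring]
  have hσx : |σ x| ≤ ((2 * π) ^ d)⁻¹ * (V * (2 * M / a) + N * √J / k) * k ^ ((d : ℝ) / s) :=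
    abs_le_of_norm_sigmaHat_le (by omega) hσc hσ hs hH hk.le (fun γ hγ ↦ (le_div_iff₀' ha).2
      (farFieldScale_mul_norm_sigmaHat_le_two_mul_MPL hd hσ0 hr hk hmass (by linarith))) x
  have hAa : ‖betaD d ^ 2 / (n : ℂ) ^ 2‖ = a * k ^ (m + 4 * n - d - 1) :=
    norm_betaD_sq_div_eq_farFieldScale_mul hk0
  have hexp : k ^ ((d : ℝ) / s + m + 4 * n - d - 1) =
      k ^ ((d : ℝ) / s) * k ^ (m + 4 * n - d - 1) := by
    rw [← rpow_add hk0]; ring_nf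
  calc |σ x|
      ≤ ((2 * π) ^ d)⁻¹ * (V * (2 * M / a) + N * √J * (M / (a * C₁))) * k ^ ((d : ℝ) / s) := by
        refine hσx.trans ?_
        rw [← mul_one_div (N * √J)]
        gcongr
    _ = ((2 * π) ^ d)⁻¹ * (2 * V + N * (√J / C₁)) * (M / a) * k ^ ((d : ℝ) / s) := by
        field_simp
    _ ≤ ((2 * π) ^ d)⁻¹ * ((2 * V + √J / C₁) * (1 + N)) * (M / a) * k ^ ((d : ℝ) / s) := by
        gcongr
        nlinarith [show 0 ≤ N * V by positivity, show 0 ≤ √J / C₁ by positivity]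
    _ = _ := by
        rw [hexp, hAa]
        field_simp

end FarField

theorem statement4_general (d n : ℕ) (hd : d = 2 ∨ d = 3) (hn : 1 ≤ n) (m C₁ : ℝ) (hC₁ : 0 < C₁)
    (s : ℕ) (hs₂ : (d : ℝ) < (s : ℝ)) :
    ∃ C > (0 : ℝ), ∀ (σ : Ed d → ℝ) (r : Ed d → Ed d → ℂ),
      Integrable σ → (∀ z, 0 ≤ σ z) → (∀ z ∉ Metric.ball (0 : Ed d) 1, σ z = 0) →
      Continuous σ → σ ≠ 0 →
      (∀ ξ, Integrable (fun z => r z ξ)) →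
      (∀ ξ : Ed d, ∀ z ∉ Metric.ball (0 : Ed d) 1, r z ξ = 0) →
      (∀ ξ : Ed d, 1 < ‖ξ‖ →
        (∫ z in Metric.ball (0 : Ed d) 1, ‖r z ξ‖) ≤ C₁ * ‖ξ‖ ^ (-(m + 1))) →
      Integrable (fun γ : Ed d =>
        (1 + ‖γ‖ ^ 2) ^ (s : ℝ) * ‖sigmaHat d σ γ‖ ^ 2) →
      ∀ k : ℝ, max (2 * C₁ / ∫ z in Metric.ball (0 : Ed d) 1, σ z) 1 < k →
      ∀ x ∈ Metric.ball (0 : Ed d) 1,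
        |σ x| ≤ C * k ^ ((d : ℝ) / (s : ℝ) + m + 4 * (n : ℝ) - (d : ℝ) - 1) *
          (1 + Real.sqrt (∫ γ : Ed d,
            (1 + ‖γ‖ ^ 2) ^ (s : ℝ) * ‖sigmaHat d σ γ‖ ^ 2)) *
          MPL d n m σ r k := by
  have hd2 : 2 ≤ d := by omega
  have hn0 : n ≠ 0 := by omega
  have hV : 0 < volume.real (ball (0 : Ed d) 1) :=
    ENNReal.toReal_pos (measure_ball_pos _ _ one_pos).ne' measure_ball_lt_top.ne
  refine ⟨((2 * π) ^ d)⁻¹ * (2 * volume.real (ball (0 : Ed d) 1) +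
    √(∫ γ : Ed d, (1 + ‖γ‖ ^ 2) ^ (-(d : ℝ))) / C₁) / ‖betaD d ^ 2 / (n : ℂ) ^ 2‖, ?_, ?_⟩
  · have := norm_betaD_sq_div_pos (d := d) hn0
    positivity
  intro σ r hσ hσ0 hσsupp hσc hσne _ _ hr hH k hk x _
  have hk1 : 1 < k := (le_max_right _ _).trans_lt hk
  rw [setIntegral_eq_integral_of_forall_compl_eq_zero hσsupp] at hk
  obtain ⟨z₀, hz₀⟩ := Function.ne_iff.1 hσne
  have hmass : 0 < ∫ z, σ z := integral_pos_of_integrable_nonneg_nonzero hσc hσ hσ0 hz₀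
  have hkmass : 2 * (C₁ / k) ≤ ∫ z, σ z := by
    have := (le_max_left _ _).trans_lt hk
    rw [div_lt_iff₀ hmass] at this
    rw [← mul_div_assoc, div_le_iff₀ (one_pos.trans hk1)]
    linarith
  exact abs_le_mul_MPL hd2 hn0 hC₁ hs₂ hσ hσ0 hσc hr hH hk1 hkmass x

/-- Lipschitz-type stability, polyharmonic case. Suppose moreover that
`σ` is continuous and not identically zero, `m ∈ (d+2−4n, d]`, `s` is an integer with
`s > max{d/4 + 2n − 1, d}`, and `N = (∫ (1+|γ|²)^s |σ̂(γ)|² dγ)^{1/2} < ∞`. Then there is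
`C > 0`, depending only on `d, n, m, s, C₁` (independent of `k` and of `σ`), such that
for every `k > max{2C₁/‖σ‖_{L¹(B₁)}, 1}`,
`‖σ‖_{L^∞(B₁)} ≤ C k^{d/s + m + 4n − d − 1} (1 + N) M_PL(k)`. -/
theorem statement4 (d n : ℕ) (hd : d = 2 ∨ d = 3) (hn : 1 ≤ n) (m C₁ : ℝ) (hC₁ : 0 < C₁)
    (hm : (d : ℝ) + 2 - 4 * (n : ℝ) < m ∧ m ≤ (d : ℝ))
    (s : ℕ) (hs₁ : (d : ℝ) / 4 + 2 * (n : ℝ) - 1 < (s : ℝ)) (hs₂ : (d : ℝ) < (s : ℝ)) :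
    ∃ C > (0 : ℝ), ∀ (σ : Ed d → ℝ) (r : Ed d → Ed d → ℂ),
      Integrable σ → (∀ z, 0 ≤ σ z) → (∀ z ∉ Metric.ball (0 : Ed d) 1, σ z = 0) →
      Continuous σ → σ ≠ 0 →
      (∀ ξ, Integrable (fun z => r z ξ)) →
      (∀ ξ : Ed d, ∀ z ∉ Metric.ball (0 : Ed d) 1, r z ξ = 0) →
      (∀ ξ : Ed d, 1 < ‖ξ‖ →
        (∫ z in Metric.ball (0 : Ed d) 1, ‖r z ξ‖) ≤ C₁ * ‖ξ‖ ^ (-(m + 1))) →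
      Integrable (fun γ : Ed d =>
        (1 + ‖γ‖ ^ 2) ^ (s : ℝ) * ‖sigmaHat d σ γ‖ ^ 2) →
      ∀ k : ℝ, max (2 * C₁ / ∫ z in Metric.ball (0 : Ed d) 1, σ z) 1 < k →
      ∀ x ∈ Metric.ball (0 : Ed d) 1,
        |σ x| ≤ C * k ^ ((d : ℝ) / (s : ℝ) + m + 4 * (n : ℝ) - (d : ℝ) - 1) *
          (1 + Real.sqrt (∫ γ : Ed d,
            (1 + ‖γ‖ ^ 2) ^ (s : ℝ) * ‖sigmaHat d σ γ‖ ^ 2)) *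
          MPL d n m σ r k :=
  statement4_general d n hd hn m C₁ hC₁ s hs₂
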